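/- arXiv:1009.5746 — 5 statements merged into one kernel-verified Lean document; each statement's English description precedes it below -/
import Mathlib

section
/- Let a₁, a₂, a₃, b₁, b₂, b₃ > 0 be real numbers and let V be the 3×3 real matrix with rows (0, a₂, −b₃), (−b₁, 0, a₃), (a₁, −b₂, 0). If a₁a₂a₃ / (b₁b₂b₃) ≥ 1, then there exists a vector u ∈ ℝ³ with u > 0 componentwise such that uᵀV ≥ 0 componentwise, i.e., u · V^j ≥ 0 for each column V^j of V, j = 1, 2, 3. -/
open Matrix

theorem stmt1 (a₁ a₂ a₃ b₁ b₂ b₃ : ℝ)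
    (ha₁ : 0 < a₁) (ha₂ : 0 < a₂) (ha₃ : 0 < a₃)
    (hb₁ : 0 < b₁) (hb₂ : 0 < b₂) (hb₃ : 0 < b₃)
    (V : Matrix (Fin 3) (Fin 3) ℝ)
    (hV : V = !![0, a₂, -b₃; -b₁, 0, a₃; a₁, -b₂, 0])
    (hβ : 1 ≤ a₁ * a₂ * a₃ / (b₁ * b₂ * b₃)) :
    ∃ u : Fin 3 → ℝ, (∀ i, 0 < u i) ∧ ∀ j, 0 ≤ (vecMul u V) j := by
  have hprod : b₁ * b₂ * b₃ ≤ a₁ * a₂ * a₃ := by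
    rw [le_div_iff₀ (by positivity)] at hβ; linarith
  refine ⟨![a₁*a₃, a₁*b₃, b₁*b₃], ?_, ?_⟩
  · intro i; fin_cases i <;> simp <;> positivity
  · intro j
    fin_cases j <;>
      simp [hV, Matrix.vecMul, dotProduct, Fin.sum_univ_three] <;>
      nlinarith
end

section
/- Let R be a 3×3 completely-S matrix that is invertible, and let θ ∈ ℝ³ satisfy R⁻¹θ < 0 componentwise. If (u, v) is a divergent solution of LCP(θ,R) (i.e., a solution with v ≠ 0), and m and n denote the numbers of strictly positive components of u and v respectively, then (m, n) is one of (1,2), (2,1), (1,1). -/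
/-!
A divergent solution has `n ≥ 1` by definition, and complementarity makes the supports of `u` and
`v` disjoint, so `m + n ≤ 3`; what has to be shown is `m ≥ 1`, i.e. `u ≠ 0`. If `u = 0` then
`θ = v ≥ 0`, and `x = -R⁻¹θ > 0` satisfies `R x = -θ ≤ 0`. This is impossible for a completely-S
matrix: any `x ≥ 0, x ≠ 0` has a coordinate with `x i > 0` and `(R x) i > 0`. For that, take `w ≥ 0`
supported on the support `s` of `x` with `R w > 0` on `s`, and subtract from `x` the largest
multiple of `w` keeping it nonnegative; the result still has `R · < 0` on `s` but a strictly smaller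
support, so induction on the support concludes.
-/

open Matrix

/-- `(u, v)` is a solution of the linear complementarity problem LCP(θ, R). -/
def IsLCPSolution {d : ℕ} (θ : Fin d → ℝ) (R : Matrix (Fin d) (Fin d) ℝ)
    (u v : Fin d → ℝ) : Prop :=
  (∀ i, 0 ≤ u i) ∧ (∀ i, 0 ≤ v i) ∧ v = θ + R.mulVec u ∧ u ⬝ᵥ v = 0

/-- `R` is a completely-S matrix: every principal submatrix of `R` is an S-matrix. -/
def CompletelyS {d : ℕ} (R : Matrix (Fin d) (Fin d) ℝ) : Prop :=
  ∀ s : Finset (Fin d), s.Nonempty →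
    ∃ w : Fin d → ℝ, (∀ i, 0 ≤ w i) ∧ (∀ i, i ∉ s → w i = 0) ∧
      ∀ i ∈ s, 0 < R.mulVec w i

theorem CompletelyS.exists_pos_and_mulVec_pos {d : ℕ} {R : Matrix (Fin d) (Fin d) ℝ}
    (hS : CompletelyS R) {x : Fin d → ℝ} (hx : 0 ≤ x) (hx0 : x ≠ 0) :
    ∃ i, 0 < x i ∧ 0 < (R *ᵥ x) i := by
  generalize hs : Finset.univ.filter (fun i => 0 < x i) = s
  induction s using Finset.strongInduction generalizing x with
  | H s ih =>
  have hmem : ∀ i, i ∈ s ↔ 0 < x i := by simp [← hs]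
  by_contra! hRx
  obtain ⟨i₀, hi₀⟩ : s.Nonempty := by
    obtain ⟨i, hi⟩ := Function.ne_iff.mp hx0
    exact ⟨i, (hmem i).2 ((hx i).lt_of_ne' hi)⟩
  obtain ⟨w, hw, hws, hRw⟩ := hS s ⟨i₀, hi₀⟩
  have hws' : ∀ i, 0 < w i → i ∈ s := fun i hi => by_contra fun h => hi.ne' (hws i h)
  obtain ⟨j, hjw, hjmin⟩ := Finset.exists_min_image (Finset.univ.filter fun i => 0 < w i)
    (fun i => x i / w i) (by
      obtain ⟨k, hk⟩ := Function.ne_iff.mp (show w ≠ 0 by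
        rintro rfl; simpa using hRw i₀ hi₀)
      exact ⟨k, by simpa using (hw k).lt_of_ne' hk⟩)
  simp only [Finset.mem_filter, Finset.mem_univ, true_and] at hjw hjmin
  set μ := x j / w j
  have hμ : 0 < μ := div_pos ((hmem j).1 (hws' j hjw)) hjw
  set q := x - μ • w
  have hq : 0 ≤ q := fun i => by
    rcases (hw i).lt_or_eq with hi | hi
    · have := hjmin i hi
      rw [le_div_iff₀ hi] at this
      simp only [q, Pi.sub_apply, Pi.smul_apply, smul_eq_mul, Pi.zero_apply]
      linarith
    · simpa [q, ← hi] using hx i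
  have hRq : ∀ i ∈ s, (R *ᵥ q) i < 0 := fun i hi => by
    have := hRx i ((hmem i).1 hi)
    have := hRw i hi
    simp only [q, mulVec_sub, mulVec_smul, Pi.sub_apply, Pi.smul_apply, smul_eq_mul]
    nlinarith
  have hqs : ∀ i, 0 < q i → i ∈ s := fun i hi => (hmem i).2 <| by
    simp only [q, Pi.sub_apply, Pi.smul_apply, smul_eq_mul] at hi
    nlinarith [hw i]
  have hq0 : q ≠ 0 := by
    rintro h
    simpa [h] using hRq i₀ hi₀
  have hsub : Finset.univ.filter (fun i => 0 < q i) ⊂ s := by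
    refine Finset.ssubset_iff_of_subset (fun i hi => hqs i (by simpa using hi)) |>.2
      ⟨j, hws' j hjw, ?_⟩
    simp [q, μ, hjw.ne']
  obtain ⟨i, hi, hRi⟩ := ih _ hsub hq hq0 rfl
  exact (hRq i (hqs i hi)).not_gt hRi

theorem CompletelyS.exists_neg_of_inv_mulVec_neg {d : ℕ} [NeZero d]
    {R : Matrix (Fin d) (Fin d) ℝ} (hS : CompletelyS R) (hR : IsUnit R.det) {θ : Fin d → ℝ}
    (hθ : ∀ i, (R⁻¹ *ᵥ θ) i < 0) : ∃ i, θ i < 0 := by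
  by_contra! hθ0
  have hx : 0 < -(R⁻¹ *ᵥ θ) := Pi.lt_def.2
    ⟨fun i => (neg_pos.2 (hθ i)).le, 0, neg_pos.2 (hθ 0)⟩
  obtain ⟨i, -, hi⟩ := hS.exists_pos_and_mulVec_pos hx.le hx.ne'
  rw [mulVec_neg, mulVec_mulVec, mul_nonsing_inv _ hR, one_mulVec, Pi.neg_apply] at hi
  linarith [hθ0 i]

theorem card_filter_pos_pos {d : ℕ} {x : Fin d → ℝ} (hx : 0 ≤ x) (hx0 : x ≠ 0) :
    0 < (Finset.univ.filter fun i => 0 < x i).card := by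
  obtain ⟨i, hi⟩ := Function.ne_iff.mp hx0
  exact Finset.card_pos.2 ⟨i, by simpa using (hx i).lt_of_ne' hi⟩

namespace IsLCPSolution

variable {d : ℕ} {θ : Fin d → ℝ} {R : Matrix (Fin d) (Fin d) ℝ} {u v : Fin d → ℝ}

theorem mul_eq_zero (h : IsLCPSolution θ R u v) (i : Fin d) : u i * v i = 0 :=
  (Finset.sum_eq_zero_iff_of_nonneg fun i _ => mul_nonneg (h.1 i) (h.2.1 i)).1 h.2.2.2 i
    (Finset.mem_univ i)

theorem card_pos_add_card_pos_le (h : IsLCPSolution θ R u v) :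
    (Finset.univ.filter fun i => 0 < u i).card + (Finset.univ.filter fun i => 0 < v i).card
      ≤ d := by
  have hdisj : Disjoint (Finset.univ.filter fun i => 0 < u i)
      (Finset.univ.filter fun i => 0 < v i) := by
    refine Finset.disjoint_left.2 fun i hu hv => ?_
    simp only [Finset.mem_filter, Finset.mem_univ, true_and] at hu hv
    exact (mul_pos hu hv).ne' (h.mul_eq_zero i)
  rw [← Finset.card_union_of_disjoint hdisj]
  exact (Finset.card_le_univ _).trans_eq (Fintype.card_fin d)

theorem ne_zero_of_exists_neg (h : IsLCPSolution θ R u v) (hθ : ∃ i, θ i < 0) : u ≠ 0 := by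
  rintro rfl
  obtain ⟨i, hi⟩ := hθ
  have hv : v = θ := by simpa using h.2.2.1
  exact hi.not_ge (hv ▸ h.2.1 i)

end IsLCPSolution

theorem stmt4 (R : Matrix (Fin 3) (Fin 3) ℝ) (hS : CompletelyS R)
    (hR : IsUnit R.det) (θ : Fin 3 → ℝ) (hθ : ∀ i, R⁻¹.mulVec θ i < 0)
    (u v : Fin 3 → ℝ) (hsol : IsLCPSolution θ R u v) (hdiv : v ≠ 0)
    (m n : ℕ)
    (hm : m = (Finset.univ.filter fun i => 0 < u i).card)
    (hn : n = (Finset.univ.filter fun i => 0 < v i).card) :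
    (m, n) = (1, 2) ∨ (m, n) = (2, 1) ∨ (m, n) = (1, 1) := by
  have hu : u ≠ 0 := hsol.ne_zero_of_exists_neg (hS.exists_neg_of_inv_mulVec_neg hR hθ)
  have hm1 : 0 < m := hm ▸ card_filter_pos_pos (fun i => hsol.1 i) hu
  have hn1 : 0 < n := hn ▸ card_filter_pos_pos (fun i => hsol.2.1 i) hdiv
  have hmn : m + n ≤ 3 := hm ▸ hn ▸ hsol.card_pos_add_card_pos_le
  simp only [Prod.mk.injEq]
  omega
end

section
/- Let R be a 3×3 completely-S matrix with unit diagonal, written R = [[1, a', c], [a, 1, c'], [b, b', 1]], and let θ ∈ ℝ³ have each component θ_i ∈ {−1, 0, 1}. Assume: (i) LCP(θ,R) has no solution in Category I; (ii) (u, v) is a solution of LCP(θ,R) with u₁ > 0, u₂ > 0, u₃ = 0, v₁ = v₂ = 0, v₃ > 0; and (iii) the 2×2 principal submatrix R̂ = [[1, a'], [a, 1]] corresponding to the two zero components of v satisfies det(R̂) = 1 − a a' < 0. Then θ = (−1, −1, 1)ᵀ, a > 1, and a' > 1. -/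
open Matrix

/-- LCP(θ,R) has a solution in Category I: exactly two components of `v` are
positive, and the complementary component of `u` is positive. -/
def CategoryI (θ : Fin 3 → ℝ) (R : Matrix (Fin 3) (Fin 3) ℝ) : Prop :=
  ∃ u v : Fin 3 → ℝ, IsLCPSolution θ R u v ∧
    ∃ i : Fin 3, 0 < u i ∧ v i = 0 ∧ ∀ j, j ≠ i → 0 < v j

set_option maxHeartbeats 1600000 in
theorem stmt5 (a a' b b' c c' : ℝ) (R : Matrix (Fin 3) (Fin 3) ℝ)
    (hRdef : R = !![1, a', c; a, 1, c'; b, b', 1])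
    (hS : CompletelyS R)
    (θ : Fin 3 → ℝ) (hθ : ∀ i, θ i ∈ ({-1, 0, 1} : Set ℝ))
    (hnoI : ¬ CategoryI θ R)
    (u v : Fin 3 → ℝ) (hsol : IsLCPSolution θ R u v)
    (hu1 : 0 < u 0) (hu2 : 0 < u 1) (hu3 : u 2 = 0)
    (hv1 : v 0 = 0) (hv2 : v 1 = 0) (hv3 : 0 < v 2)
    (hdet : 1 - a * a' < 0) :
    θ = ![-1, -1, 1] ∧ 1 < a ∧ 1 < a' := by
  simp only [Set.mem_insert_iff, Set.mem_singleton_iff] at hθ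
  obtain ⟨hu, hv, heq, hcomp⟩ := hsol
  have h0 := congrFun heq 0
  have h1 := congrFun heq 1
  have h2 := congrFun heq 2
  simp [hRdef, Matrix.mulVec, dotProduct, Fin.sum_univ_three, hu3, hv1, hv2] at h0 h1 h2
  -- Step 1: a > 0 and a' > 0
  obtain ⟨w, hw0, hwz, hwpos⟩ := hS {0, 1} ⟨0, by simp⟩
  have hw2 : w 2 = 0 := hwz 2 (by decide)
  have hp0 := hwpos 0 (by simp)
  have hp1 := hwpos 1 (by simp)
  simp [hRdef, Matrix.mulVec, dotProduct, Fin.sum_univ_three, hw2] at hp0 hp1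
  have ha : 0 < a := by nlinarith [hw0 0, hw0 1, mul_nonneg (hw0 0) (hw0 1)]
  have ha' : 0 < a' := by nlinarith [hw0 0, hw0 1, mul_nonneg (hw0 0) (hw0 1)]
  -- Step 2: θ 0 = θ 1 = -1
  have hθ0 : θ 0 = -1 := by
    rcases hθ 0 with h | h | h
    · exact h
    · nlinarith
    · nlinarith
  have hθ1 : θ 1 = -1 := by
    rcases hθ 1 with h | h | h
    · exact h
    · nlinarith
    · nlinarith
  rw [hθ0] at h0; rw [hθ1] at h1
  -- Step 3: a > 1, a' > 1
  have ha1 : 1 < a := by nlinarith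
  have ha'1 : 1 < a' := by nlinarith
  have hsum : u 0 + u 1 < 1 := by nlinarith
  -- column vectors
  have hmv0 : R.mulVec ![1,0,0] = ![1,a,b] := by
    funext i; fin_cases i <;>
      simp [hRdef, Matrix.mulVec, dotProduct, Fin.sum_univ_three]
  have hmv1 : R.mulVec ![0,1,0] = ![a',1,b'] := by
    funext i; fin_cases i <;>
      simp [hRdef, Matrix.mulVec, dotProduct, Fin.sum_univ_three]
  -- Step 4: θ 2 = 1
  have hθ2 : θ 2 = 1 := by
    by_contra hne
    have hθ2le : θ 2 ≤ 0 := by rcases hθ 2 with h | h | h <;> [linarith; linarith; exact absurd h hne]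
    by_cases hb : -θ 2 < b
    · apply hnoI
      refine ⟨![1,0,0], θ + R.mulVec ![1,0,0], ⟨?_, ?_, rfl, ?_⟩, 0, by norm_num, ?_, ?_⟩
      · intro i; fin_cases i <;> norm_num
      · intro i; rw [hmv0]; fin_cases i <;> simp [hθ0, hθ1] <;> linarith
      · rw [hmv0]; simp [dotProduct, Fin.sum_univ_three, hθ0]
      · rw [hmv0]; simp [hθ0]
      · intro j hj
        rw [hmv0]
        fin_cases j
        · exact absurd rfl hj
        · simp [hθ1]; linarith
        · simp; linarith
    · by_cases hb' : -θ 2 < b'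
      · apply hnoI
        refine ⟨![0,1,0], θ + R.mulVec ![0,1,0], ⟨?_, ?_, rfl, ?_⟩, 1, by norm_num, ?_, ?_⟩
        · intro i; fin_cases i <;> norm_num
        · intro i; rw [hmv1]; fin_cases i <;> simp [hθ0, hθ1] <;> linarith
        · rw [hmv1]; simp [dotProduct, Fin.sum_univ_three, hθ1]
        · rw [hmv1]; simp [hθ1]
        · intro j hj
          rw [hmv1]
          fin_cases j
          · simp [hθ0]; linarith
          · exact absurd rfl hj
          · simp; linarith
      · push_neg at hb hb'
        have p1 : 0 ≤ (-θ 2 - b) * u 0 := mul_nonneg (by linarith) hu1.le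
        have p2 : 0 ≤ (-θ 2 - b') * u 1 := mul_nonneg (by linarith) hu2.le
        have p3 : 0 ≤ (-θ 2) * (1 - (u 0 + u 1)) :=
          mul_nonneg (by linarith) (by linarith)
        nlinarith [p1, p2, p3]
  refine ⟨?_, ha1, ha'1⟩
  funext i; fin_cases i <;> simp [hθ0, hθ1, hθ2]
end

section
/- Let R be a 3×3 completely-S matrix with unit diagonal that is invertible, and let θ ∈ ℝ³ have each component θ_i ∈ {−1, 0, 1} and satisfy R⁻¹θ < 0 componentwise. Then LCP(θ,R) has no solution in Category III. -/
open Matrix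

/-- Category III: exactly one component of `v` is positive (say component `k`, with
`v` vanishing at the two other coordinates `j₁, j₂`), the 2×2 principal submatrix
`R̂` of `R` indexed by `j₁, j₂` has zero determinant, and the two complementary
components of `u` are not both zero. -/
def CategoryIII (θ : Fin 3 → ℝ) (R : Matrix (Fin 3) (Fin 3) ℝ) : Prop :=
  ∃ u v : Fin 3 → ℝ, IsLCPSolution θ R u v ∧
    ∃ k j₁ j₂ : Fin 3, j₁ ≠ j₂ ∧ j₁ ≠ k ∧ j₂ ≠ k ∧
      0 < v k ∧ v j₁ = 0 ∧ v j₂ = 0 ∧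
      R j₁ j₁ * R j₂ j₂ - R j₁ j₂ * R j₂ j₁ = 0 ∧
      ¬ (u j₁ = 0 ∧ u j₂ = 0)

lemma cover3 : ∀ (j₁ j₂ k l : Fin 3), j₁ ≠ j₂ → j₁ ≠ k → j₂ ≠ k →
    l = j₁ ∨ l = j₂ ∨ l = k := by decide

lemma sum3 (j₁ j₂ k : Fin 3) (h12 : j₁ ≠ j₂) (h1k : j₁ ≠ k) (h2k : j₂ ≠ k)
    (f : Fin 3 → ℝ) : ∑ i, f i = f j₁ + f j₂ + f k := by
  fin_cases j₁ <;> fin_cases j₂ <;> fin_cases k <;> simp_all [Fin.sum_univ_three] <;> ring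

theorem stmt7 (R : Matrix (Fin 3) (Fin 3) ℝ) (hS : CompletelyS R)
    (hdiag : ∀ i, R i i = 1) (hR : IsUnit R.det)
    (θ : Fin 3 → ℝ) (hθ : ∀ i, θ i ∈ ({-1, 0, 1} : Set ℝ))
    (hneg : ∀ i, R⁻¹.mulVec θ i < 0) :
    ¬ CategoryIII θ R := by
  rintro ⟨u, v, ⟨hu, hv, hveq, hcomp⟩, k, j₁, j₂, h12, h1k, h2k, hvk, hv1, hv2, hdet, huz⟩
  have hk1 : k ≠ j₁ := fun h => h1k h.symm
  have hk2 : k ≠ j₂ := fun h => h2k h.symm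
  set a := R j₁ j₂ with ha_def
  set b := R j₂ j₁ with hb_def
  have hab : a * b = 1 := by
    have h1 := hdiag j₁; have h2 := hdiag j₂
    rw [h1, h2] at hdet; linarith
  -- mulVec expansion
  have hmv : ∀ (i : Fin 3) (w : Fin 3 → ℝ),
      (R.mulVec w) i = R i j₁ * w j₁ + R i j₂ * w j₂ + R i k * w k := by
    intro i w
    simp only [Matrix.mulVec, dotProduct]
    exact sum3 j₁ j₂ k h12 h1k h2k (fun j => R i j * w j)
  -- u k = 0
  have hsum : u j₁ * v j₁ + u j₂ * v j₂ + u k * v k = 0 := by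
    rw [← sum3 j₁ j₂ k h12 h1k h2k (fun i => u i * v i)]
    simpa [dotProduct] using hcomp
  have huk : u k = 0 := by
    rw [hv1, hv2] at hsum
    have hkk : u k * v k = 0 := by linarith
    rcases mul_eq_zero.mp hkk with h | h
    · exact h
    · exact absurd h (ne_of_gt hvk)
  -- the two equations
  have e1 : θ j₁ + u j₁ + a * u j₂ = 0 := by
    have h := congrFun hveq j₁
    rw [Pi.add_apply, hmv j₁ u, hdiag j₁, huk, hv1] at h
    rw [← ha_def] at h; linarith
  have e2 : θ j₂ + b * u j₁ + u j₂ = 0 := by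
    have h := congrFun hveq j₂
    rw [Pi.add_apply, hmv j₂ u, hdiag j₂, huk, hv2] at h
    rw [← hb_def] at h; linarith
  -- S-matrix on {j₁, j₂}
  obtain ⟨w, hw0, hwsupp, hwpos⟩ := hS {j₁, j₂} ⟨j₁, by simp⟩
  have hwk : w k = 0 := hwsupp k (by simp [hk1, hk2])
  have hp1 : 0 < w j₁ + a * w j₂ := by
    have h := hwpos j₁ (by simp)
    rw [hmv j₁ w, hdiag j₁, hwk, ← ha_def] at h; linarith
  have hp2 : 0 < b * w j₁ + w j₂ := by
    have h := hwpos j₂ (by simp)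
    rw [hmv j₂ w, hdiag j₂, hwk, ← hb_def] at h; linarith
  have haz : a ≠ 0 := by intro h; rw [h] at hab; simp at hab
  have ha : 0 < a := by
    rcases lt_or_gt_of_ne haz with h | h
    · exfalso
      have key : w j₁ + a * w j₂ = a * (b * w j₁ + w j₂) := by
        have h' : a * (b * w j₁ + w j₂) = (a * b) * w j₁ + a * w j₂ := by ring
        rw [h', hab, one_mul]
      have hneg' := mul_neg_of_neg_of_pos h hp2
      linarith [hp1, key ▸ hneg']
    · exact h
  have hb : 0 < b := by
    by_contra h
    push_neg at h
    nlinarith [mul_nonpos_of_nonneg_of_nonpos (le_of_lt ha) h]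
  -- θ j₁ = -1
  have hupos : 0 < u j₁ + a * u j₂ := by
    rcases eq_or_lt_of_le (hu j₁) with h1 | h1
    · rcases eq_or_lt_of_le (hu j₂) with h2 | h2
      · exact absurd ⟨h1.symm, h2.symm⟩ huz
      · nlinarith
    · nlinarith [mul_nonneg (le_of_lt ha) (hu j₂)]
  have hθ1 : θ j₁ = -1 := by
    have hm := hθ j₁
    simp only [Set.mem_insert_iff, Set.mem_singleton_iff] at hm
    rcases hm with h | h | h
    · exact h
    · linarith
    · linarith
  -- θ j₂ = b * θ j₁, hence b = 1, a = 1
  have hθ2eq : θ j₂ = b * θ j₁ := by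
    linear_combination e2 - b * e1 + u j₂ * hab
  have hθ2 : θ j₂ = -1 := by
    have hm := hθ j₂
    simp only [Set.mem_insert_iff, Set.mem_singleton_iff] at hm
    have hlt : θ j₂ < 0 := by rw [hθ2eq, hθ1]; nlinarith
    rcases hm with h | h | h
    · exact h
    · linarith
    · linarith
  have hb1 : b = 1 := by rw [hθ1, hθ2] at hθ2eq; linarith
  have ha1 : a = 1 := by rw [hb1, mul_one] at hab; exact hab
  -- use hneg
  set x := R⁻¹.mulVec θ with hx_def
  have hRx : R.mulVec x = θ := by
    rw [hx_def, Matrix.mulVec_mulVec, Matrix.mul_nonsing_inv R hR, Matrix.one_mulVec]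
  have f1 : x j₁ + x j₂ + R j₁ k * x k = -1 := by
    have h := congrFun hRx j₁
    rw [hmv j₁ x, hdiag j₁, ← ha_def, ha1, hθ1] at h; linarith
  have f2 : x j₁ + x j₂ + R j₂ k * x k = -1 := by
    have h := congrFun hRx j₂
    rw [hmv j₂ x, hdiag j₂, ← hb_def, hb1, hθ2] at h; linarith
  have hxk : x k < 0 := hneg k
  have hcol : R j₁ k = R j₂ k := by
    have h : (R j₁ k - R j₂ k) * x k = 0 := by linarith [f1, f2]
    rcases mul_eq_zero.mp h with h' | h'
    · linarith
    · exact absurd h' (ne_of_lt hxk)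
  -- rows j₁ and j₂ of R are equal, contradicting invertibility
  have hrows : R j₁ = R j₂ := by
    funext l
    rcases cover3 j₁ j₂ k l h12 h1k h2k with h | h | h <;> rw [h]
    · rw [hdiag j₁, ← hb_def, hb1]
    · rw [hdiag j₂, ← ha_def, ha1]
    · exact hcol
  have hdet0 : R.det = 0 := Matrix.det_zero_of_row_eq h12 hrows
  rw [hdet0] at hR
  exact absurd (isUnit_zero_iff.mp hR) (by norm_num)
end

section
/- Let a, b ∈ ℝ and let R be the 2×2 matrix [[1, b], [a, 1]] with det(R) = 1 − ab > 0, and let θ ∈ ℝ² satisfy R⁻¹θ ≤ 0 componentwise. Then every fluid path (y, z) associated with (θ, R) that starts from z(0) = 0 remains at 0; that is, z(t) = 0 for all t ≥ 0. -/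
open Matrix Set

/-- `(y, z)` is a fluid path associated with the data `(θ, R)` in dimension `d`:
`z(t) = z(0) + θ t + R y(t)`, `z(t)` lies in the nonnegative orthant, `y` is
componentwise nondecreasing with `y(0) = 0`, and each `y_j` is constant on every
closed interval on which `z_j` stays strictly positive. (All conditions are imposed
for times `t ≥ 0`.) -/
def IsFluidPath {d : ℕ} (θ : Fin d → ℝ) (R : Matrix (Fin d) (Fin d) ℝ)
    (y z : ℝ → Fin d → ℝ) : Prop :=
  ContinuousOn y (Ici 0) ∧ ContinuousOn z (Ici 0) ∧
  (∀ t : ℝ, 0 ≤ t → z t = fun j => z 0 j + θ j * t + R.mulVec (y t) j) ∧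
  (∀ t : ℝ, 0 ≤ t → ∀ j, 0 ≤ z t j) ∧
  y 0 = 0 ∧
  (∀ s t : ℝ, 0 ≤ s → s ≤ t → ∀ j, y s j ≤ y t j) ∧
  (∀ j : Fin d, ∀ s t : ℝ, 0 ≤ s → s ≤ t →
    (∀ r ∈ Icc s t, 0 < z r j) → y s j = y t j)

/-!
Write `θ = -R c` with `c = -R⁻¹ θ ≥ 0`; then `z t = R u t` for `u t = y t - t c`, and `u_j`
is nonincreasing on any interval where `z_j > 0`. With the weights `w = (1 + (-a)⁺, 1 + (-b)⁺)`,
whenever `V = max_j w_j u_j` is positive, a coordinate attaining the maximum has `z_j > 0`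
(this uses `R u ≥ 0` and `1 - a b > 0`), so `V` never increases from a positive value. As
`V 0 = 0`, continuity gives `V ≤ 0`, i.e. `u ≤ 0`, and `u ≤ 0`, `R u ≥ 0`, `1 - a b > 0`
force `u = 0`.
-/

open Filter Topology

theorem eventually_le_of_tendsto_of_eq {α β : Type*} [LinearOrder β] [TopologicalSpace β]
    [ClosedIciTopology β] {l : Filter α} {f : α → β} {x : α} {c : β}
    (hf : Tendsto f l (𝓝 (f x))) (hc : f x ≤ c) (heq : f x = c → ∀ᶠ r in l, f r ≤ c) :
    ∀ᶠ r in l, f r ≤ c := by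
  rcases hc.lt_or_eq with hlt | hxc
  · exact (hf.eventually_lt_const hlt).mono fun _ => le_of_lt
  · exact heq hxc

theorem nonpos_of_eventually_le_of_pos {V : ℝ → ℝ} {a : ℝ} (hV : ContinuousOn V (Ici a))
    (ha : V a ≤ 0) (hloc : ∀ t, a ≤ t → 0 < V t → ∀ᶠ r in 𝓝[>] t, V r ≤ V t) :
    ∀ t, a ≤ t → V t ≤ 0 := by
  intro t ht
  refine le_of_forall_pos_le_add fun c hc => ?_
  have hsub : Icc a t ⊆ {r | V r ≤ 0 + c} := by
    refine IsClosed.Icc_subset_of_forall_mem_nhdsWithin ?_ (by simpa using ha.trans hc.le) ?_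
    · rw [inter_comm]
      exact (hV.mono Icc_subset_Ici_self).preimage_isClosed_of_isClosed isClosed_Icc isClosed_Iic
    · rintro x ⟨hx, hax, -⟩
      have hcont : Tendsto V (𝓝[>] x) (𝓝 (V x)) :=
        (hV x hax).mono_left (nhdsWithin_mono _ (Ioi_subset_Ici hax))
      exact eventually_le_of_tendsto_of_eq hcont hx fun hxc =>
        hxc ▸ hloc x hax (by rw [hxc]; linarith)
  exact hsub ⟨ht, le_rfl⟩

noncomputable def compensatedRegulator {d : ℕ} (θ : Fin d → ℝ) (R : Matrix (Fin d) (Fin d) ℝ)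
    (y : ℝ → Fin d → ℝ) (t : ℝ) : Fin d → ℝ :=
  y t + t • R⁻¹ *ᵥ θ

namespace IsFluidPath

variable {d : ℕ} {θ : Fin d → ℝ} {R : Matrix (Fin d) (Fin d) ℝ} {y z : ℝ → Fin d → ℝ}

theorem nonneg (h : IsFluidPath θ R y z) {t : ℝ} (ht : 0 ≤ t) (j : Fin d) : 0 ≤ z t j :=
  h.2.2.2.1 t ht j

theorem eventually_eq_of_pos (h : IsFluidPath θ R y z) {t : ℝ} (ht : 0 ≤ t) {j : Fin d}
    (hz : 0 < z t j) : ∀ᶠ r in 𝓝[>] t, y r j = y t j := by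
  have hcont : ContinuousWithinAt (fun r => z r j) (Ici t) t :=
    ((continuous_apply j).comp_continuousOn h.2.1 t ht).mono (Ici_subset_Ici.2 ht)
  obtain ⟨u, htu, hu⟩ := mem_nhdsGE_iff_exists_Ico_subset.1 (hcont (lt_mem_nhds hz))
  filter_upwards [Ioo_mem_nhdsGT htu] with r hr
  exact (h.2.2.2.2.2.2 j t r ht hr.1.le fun q hq => hu ⟨hq.1, hq.2.trans_lt hr.2⟩).symm

theorem sub_eq_mulVec_compensatedRegulator (h : IsFluidPath θ R y z) (hR : IsUnit R.det)
    {t : ℝ} (ht : 0 ≤ t) : z t - z 0 = R *ᵥ compensatedRegulator θ R y t := by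
  rw [h.2.2.1 t ht, compensatedRegulator, mulVec_add, mulVec_smul, mulVec_mulVec,
    mul_nonsing_inv R hR, one_mulVec]
  ext j
  simp only [Pi.sub_apply, Pi.add_apply, Pi.smul_apply, smul_eq_mul]
  ring

theorem compensatedRegulator_zero (h : IsFluidPath θ R y z) :
    compensatedRegulator θ R y 0 = 0 := by
  simp [compensatedRegulator, h.2.2.2.2.1]

theorem continuousOn_compensatedRegulator (h : IsFluidPath θ R y z) :
    ContinuousOn (compensatedRegulator θ R y) (Ici 0) :=
  h.1.add (continuousOn_id.smul continuousOn_const)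

theorem eventually_compensatedRegulator_le (h : IsFluidPath θ R y z) {t : ℝ} (ht : 0 ≤ t)
    {j : Fin d} (hθ : (R⁻¹ *ᵥ θ) j ≤ 0) (hz : 0 < z t j) :
    ∀ᶠ r in 𝓝[>] t, compensatedRegulator θ R y r j ≤ compensatedRegulator θ R y t j := by
  filter_upwards [h.eventually_eq_of_pos ht hz, self_mem_nhdsWithin] with r hy hr
  simp only [compensatedRegulator, Pi.add_apply, Pi.smul_apply, smul_eq_mul, hy]
  nlinarith [mem_Ioi.1 hr]

end IsFluidPath

section TwoByTwo

variable {a b : ℝ}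

def weightedMax (a b : ℝ) (v : Fin 2 → ℝ) : ℝ :=
  max ((1 + max (-a) 0) * v 0) ((1 + max (-b) 0) * v 1)

theorem continuous_weightedMax : Continuous (weightedMax a b) := by
  unfold weightedMax; fun_prop

theorem add_mul_pos_of_weighted_le (hab : 0 < 1 - a * b) {p q : ℝ} (hp : 0 < p)
    (hq : 0 ≤ a * p + q) (hle : (1 + max (-b) 0) * q ≤ (1 + max (-a) 0) * p) :
    0 < p + b * q := by
  rcases le_or_gt 0 b with hb | hb
  · nlinarith [mul_nonneg hb hq]
  · rw [max_eq_left (by linarith : 0 ≤ -b)] at hle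
    rcases le_or_gt 0 a with ha | ha
    · rw [max_eq_right (by linarith : -a ≤ 0)] at hle
      nlinarith
    · rw [max_eq_left (by linarith : 0 ≤ -a)] at hle
      nlinarith [mul_le_mul_of_nonneg_left hle (by linarith : (0:ℝ) ≤ -b)]

theorem eventually_weightedMax_le {α : Type*} {l : Filter α} {u : α → Fin 2 → ℝ} {t : α}
    (hab : 0 < 1 - a * b) (hu : Tendsto u l (𝓝 (u t)))
    (hz0 : 0 ≤ u t 0 + b * u t 1) (hz1 : 0 ≤ a * u t 0 + u t 1)
    (hmono0 : 0 < u t 0 + b * u t 1 → ∀ᶠ r in l, u r 0 ≤ u t 0)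
    (hmono1 : 0 < a * u t 0 + u t 1 → ∀ᶠ r in l, u r 1 ≤ u t 1)
    (hpos : 0 < weightedMax a b (u t)) :
    ∀ᶠ r in l, weightedMax a b (u r) ≤ weightedMax a b (u t) := by
  have hw0 : 0 < 1 + max (-a) 0 := by positivity
  have hw1 : 0 < 1 + max (-b) 0 := by positivity
  have h0 : ∀ᶠ r in l, (1 + max (-a) 0) * u r 0 ≤ weightedMax a b (u t) := by
    refine eventually_le_of_tendsto_of_eq (f := fun r => (1 + max (-a) 0) * u r 0)
      (((continuous_apply 0).tendsto _).comp hu |>.const_mul _) (le_max_left _ _) fun heq => ?_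
    have hle : (1 + max (-b) 0) * u t 1 ≤ (1 + max (-a) 0) * u t 0 := heq ▸ le_max_right _ _
    have hp : 0 < u t 0 := pos_of_mul_pos_right (heq ▸ hpos) hw0.le
    filter_upwards [hmono0 (add_mul_pos_of_weighted_le hab hp hz1 hle)] with r hr
    exact heq ▸ mul_le_mul_of_nonneg_left hr hw0.le
  have h1 : ∀ᶠ r in l, (1 + max (-b) 0) * u r 1 ≤ weightedMax a b (u t) := by
    refine eventually_le_of_tendsto_of_eq (f := fun r => (1 + max (-b) 0) * u r 1)
      (((continuous_apply 1).tendsto _).comp hu |>.const_mul _) (le_max_right _ _) fun heq => ?_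
    have hle : (1 + max (-a) 0) * u t 0 ≤ (1 + max (-b) 0) * u t 1 := heq ▸ le_max_left _ _
    have hq : 0 < u t 1 := pos_of_mul_pos_right (heq ▸ hpos) hw1.le
    have hz1pos : 0 < u t 1 + a * u t 0 :=
      add_mul_pos_of_weighted_le (by linarith) hq (by linarith) hle
    filter_upwards [hmono1 (by linarith)] with r hr
    exact heq ▸ mul_le_mul_of_nonneg_left hr hw1.le
  filter_upwards [h0, h1] with r hr0 hr1 using max_le hr0 hr1

theorem eq_zero_of_weightedMax_nonpos (hab : 0 < 1 - a * b) {v : Fin 2 → ℝ}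
    (hv : weightedMax a b v ≤ 0) (h0 : 0 ≤ v 0 + b * v 1) (h1 : 0 ≤ a * v 0 + v 1) : v = 0 := by
  have hw0 : 0 < 1 + max (-a) 0 := by positivity
  have hw1 : 0 < 1 + max (-b) 0 := by positivity
  have hv0 : v 0 ≤ 0 := nonpos_of_mul_nonpos_right ((le_max_left _ _).trans hv) hw0
  have hv1 : v 1 ≤ 0 := nonpos_of_mul_nonpos_right ((le_max_right _ _).trans hv) hw1
  have hprod : v 0 * v 1 = 0 := by
    nlinarith [mul_nonneg (neg_nonneg.2 hv0) h1, mul_nonneg (neg_nonneg.2 hv1) h0]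
  have hv : v 0 = 0 ∧ v 1 = 0 := by
    constructor <;> rcases mul_eq_zero.1 hprod with h | h <;> rw [h] at h0 h1 <;> linarith
  ext j; fin_cases j
  exacts [hv.1, hv.2]

end TwoByTwo

theorem stmt9 (a b : ℝ) (R : Matrix (Fin 2) (Fin 2) ℝ)
    (hRdef : R = !![1, b; a, 1]) (hdet : 0 < 1 - a * b)
    (θ : Fin 2 → ℝ) (hθ : ∀ i, R⁻¹.mulVec θ i ≤ 0)
    (y z : ℝ → Fin 2 → ℝ) (hfluid : IsFluidPath θ R y z)
    (hz0 : z 0 = 0) :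
    ∀ t : ℝ, 0 ≤ t → z t = 0 := by
  have hR : IsUnit R.det := by
    rw [hRdef, det_fin_two_of]
    exact IsUnit.mk0 _ (by linarith)
  set u := compensatedRegulator θ R y
  have hz : ∀ t, 0 ≤ t → z t 0 = u t 0 + b * u t 1 ∧ z t 1 = a * u t 0 + u t 1 := by
    intro t ht
    have h := (hfluid.sub_eq_mulVec_compensatedRegulator hR ht).trans
      (congrArg (· *ᵥ u t) hRdef)
    rw [hz0, sub_zero] at h
    simp [h, mulVec, dotProduct, Fin.sum_univ_two]
  have hV : ∀ t, 0 ≤ t → weightedMax a b (u t) ≤ 0 := by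
    refine nonpos_of_eventually_le_of_pos
      (continuous_weightedMax.comp_continuousOn hfluid.continuousOn_compensatedRegulator)
      (by simp [u, hfluid.compensatedRegulator_zero, weightedMax]) fun t ht hpos => ?_
    obtain ⟨h0, h1⟩ := hz t ht
    exact eventually_weightedMax_le hdet
      ((hfluid.continuousOn_compensatedRegulator t ht).mono_left
        (nhdsWithin_mono _ (Ioi_subset_Ici ht)))
      (h0 ▸ hfluid.nonneg ht 0) (h1 ▸ hfluid.nonneg ht 1)
      (fun hpos0 => hfluid.eventually_compensatedRegulator_le ht (hθ 0) (h0 ▸ hpos0))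
      (fun hpos1 => hfluid.eventually_compensatedRegulator_le ht (hθ 1) (h1 ▸ hpos1)) hpos
  intro t ht
  obtain ⟨h0, h1⟩ := hz t ht
  have hu : u t = 0 := eq_zero_of_weightedMax_nonpos hdet (hV t ht)
    (h0 ▸ hfluid.nonneg ht 0) (h1 ▸ hfluid.nonneg ht 1)
  ext j; fin_cases j
  · simp [h0, hu]
  · simp [h1, hu]
end
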